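/- arXiv:1005.4528 — 6 statements merged into one kernel-verified Lean document; each statement's English description precedes it below -/
import Mathlib

section
/- Let $G$ be a group, $n \geq 1$, and for each $i = 1, \ldots, r$ let $\alpha_i : G \to S_n$ be a surjective group homomorphism. Let $\alpha = \prod_i \alpha_i : G \to S_n^r$ and let $\beta : G \to (\mathbb{Z}/2\mathbb{Z})^r$ be the composition of $\alpha$ with the map $S_n^r \to S_n^r/A_n^r \cong (\mathbb{Z}/2\mathbb{Z})^r$ induced by the sign in each coordinate. If $\beta$ is surjective, then $\alpha$ is surjective. -/
/-!
Induct on `r`, splitting off the coordinate `0`. By induction the other coordinates are jointly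
onto, so it suffices that `α 0` maps the kernel `K` of their product onto `Sₙ`. The image `N` of
`K` is normal in `Sₙ` because `α 0` is onto. If every element of `K` had even image, the sign of
`α 0` would factor through the product of the other coordinates; every homomorphism `Sₙ → ℤˣ`
kills `Aₙ`, so that sign would be `1` whenever the other signs are `1`, contradicting the
surjectivity of `β`. Finally, a normal subgroup of `Sₙ` containing an odd permutation `σ` is
everything: commutators of `σ` with transpositions produce a 3-cycle, hence `Aₙ ≤ N`.
-/

open Equiv Function

theorem MonoidHom.prod_surjective_of_map_ker_eq_top {G H K : Type*} [Group G] [Group H]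
    [Group K] {f : G →* H} (hf : Surjective f) {φ : G →* K} (hφ : f.ker.map φ = ⊤) :
    Surjective (f.prod φ) := by
  rintro ⟨h, k⟩
  obtain ⟨g₁, rfl⟩ := hf h
  obtain ⟨g₂, hg₂, hφg₂⟩ : (φ g₁)⁻¹ * k ∈ f.ker.map φ := hφ ▸ Subgroup.mem_top _
  refine ⟨g₁ * g₂, ?_⟩
  simp [hφg₂, MonoidHom.mem_ker.1 hg₂]

namespace Equiv.Perm

variable {α : Type*} [DecidableEq α]

theorem map_eq_one_of_sign_eq_one [Fintype α] (φ : Perm α →* ℤˣ) {σ : Perm α}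
    (hσ : sign σ = 1) : φ σ = 1 := by
  by_cases hφ : Surjective φ
  · rw [eq_sign_of_surjective_hom hφ, hσ]
  · by_contra hφσ
    refine hφ fun u => ?_
    rcases Int.units_eq_one_or u with rfl | rfl
    · exact ⟨1, map_one φ⟩
    · exact ⟨σ, (Int.units_eq_one_or _).resolve_left hφσ⟩

theorem pi_map_eq_one_of_sign_eq_one [Fintype α] {ι : Type*} [Finite ι] [DecidableEq ι]
    (φ : (ι → Perm α) →* ℤˣ) {x : ι → Perm α} (hx : ∀ i, sign (x i) = 1) : φ x = 1 :=
  Subgroup.pi_mem_of_mulSingle_mem (H := φ.ker) x fun i =>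
    map_eq_one_of_sign_eq_one (φ.comp (MonoidHom.mulSingle (fun _ => Perm α) i)) (hx i)

theorem exists_mem_ker_sign_eq_neg_one [Fintype α] {G ι : Type*} [Group G] [Finite ι]
    [DecidableEq ι] {f : G →* (ι → Perm α)} (hf : Surjective f) (φ : G →* Perm α)
    {g : G} (hfg : ∀ i, sign (f g i) = 1) (hφg : sign (φ g) = -1) :
    ∃ k ∈ f.ker, sign (φ k) = -1 := by
  by_contra! h
  have hle : f.ker ≤ (sign.comp φ).ker := fun k hk =>
    (Int.units_eq_one_or _).resolve_right (h k hk)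
  have hlift := f.liftOfRightInverse_comp_apply _ (rightInverse_surjInv hf) ⟨_, hle⟩ g
  rw [pi_map_eq_one_of_sign_eq_one _ hfg, MonoidHom.comp_apply, hφg] at hlift
  exact absurd hlift (by decide)

variable {N : Subgroup (Perm α)} [N.Normal]

theorem swap_mul_swap_mem {σ : Perm α} (hσ : σ ∈ N) (x y : α) :
    swap (σ x) (σ y) * swap x y ∈ N := by
  have hcomm : swap (σ x) (σ y) * swap x y = σ * (swap x y * σ⁻¹ * (swap x y)⁻¹) := by
    rw [swap_apply_apply, swap_inv]
    group
  rw [hcomm]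
  exact N.mul_mem hσ (Subgroup.Normal.conj_mem ‹_› _ (N.inv_mem hσ) _)

theorem exists_isThreeCycle_mem_of_apply_eq [Fintype α] {g : Perm α} (hg : g ∈ N) {a z : α}
    (ha : g a ≠ a) (hz : g z = z) : ∃ c ∈ N, IsThreeCycle c := by
  have hza : z ≠ a := fun h => ha (h ▸ hz)
  have hzga : z ≠ g a := fun h => hza (g.injective (hz.trans h))
  refine ⟨_, swap_mul_swap_mem hg z a, ?_⟩
  rw [hz]
  exact isThreeCycle_swap_mul_swap_same hzga hza ha

theorem exists_isThreeCycle_mem_of_involutive [Fintype α] {σ : Perm α} (hσ : σ ∈ N)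
    (hs : sign σ = -1) (hinv : Involutive σ) (h3 : 3 ≤ ENat.card α) :
    ∃ c ∈ N, IsThreeCycle c := by
  obtain ⟨a, ha⟩ : ∃ a, σ a ≠ a := not_forall.1 fun h => by
    simp [show σ = 1 from Equiv.ext h] at hs
  by_cases hfix : ∃ z, σ z = z
  · obtain ⟨z, hz⟩ := hfix
    exact exists_isThreeCycle_mem_of_apply_eq hσ ha hz
  push Not at hfix
  obtain ⟨c, hca, hcσa⟩ := ENat.exists_ne_ne_of_three_le h3 a (σ a)
  have hσca : σ c ≠ a := fun h => hcσa (by rw [← h, hinv])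
  have hσcσa : σ c ≠ σ a := fun h => hca (σ.injective h)
  by_cases hout : ∃ e, e ≠ a ∧ e ≠ σ a ∧ e ≠ c ∧ e ≠ σ c
  · obtain ⟨e, hea, heσa, hec, heσc⟩ := hout
    refine exists_isThreeCycle_mem_of_apply_eq (swap_mul_swap_mem hσ a c) (a := a) (z := e) ?_ ?_
    · rw [Perm.mul_apply, swap_apply_left, swap_apply_of_ne_of_ne hcσa (hfix c).symm]
      exact hca
    · rw [Perm.mul_apply, swap_apply_of_ne_of_ne hea hec, swap_apply_of_ne_of_ne heσa heσc]
  · push Not at hout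
    -- `σ` moves only `a, σ a, c, σ c`, so it would be even
    have hσ_eq : σ = swap a (σ a) * swap c (σ c) := by
      ext x
      obtain hx | hx | hx | hx : x = a ∨ x = σ a ∨ x = c ∨ x = σ c := by
        by_contra! h
        exact h.2.2.2 (hout x h.1 h.2.1 h.2.2.1)
      all_goals
        rw [hx]
        simp [swap_apply_of_ne_of_ne, hca, hcσa, hσca, hσcσa, hca.symm, hcσa.symm, hσca.symm,
          hσcσa.symm, hinv a, hinv c]
    rw [hσ_eq, map_mul, sign_swap ha.symm, sign_swap (hfix c).symm] at hs
    exact absurd hs (by decide)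

theorem exists_isThreeCycle_mem [Fintype α] {σ : Perm α} (hσ : σ ∈ N) (hs : sign σ = -1)
    (h3 : 3 ≤ ENat.card α) : ∃ c ∈ N, IsThreeCycle c := by
  by_cases hcyc : ∃ a, σ a ≠ a ∧ σ (σ a) ≠ a
  · obtain ⟨a, ha, hσa⟩ := hcyc
    refine ⟨_, swap_mul_swap_mem hσ a (σ a), ?_⟩
    rw [swap_comm a]
    exact isThreeCycle_swap_mul_swap_same (fun h => ha (σ.injective h.symm)) ha hσa
  · refine exists_isThreeCycle_mem_of_involutive hσ hs (fun a => ?_) h3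
    by_cases ha : σ a = a
    · rw [ha, ha]
    · exact not_and_not_right.1 (not_exists.1 hcyc a) ha

theorem alternatingGroup_le_of_sign_eq_neg_one [Fintype α] {σ : Perm α} (hσ : σ ∈ N)
    (hs : sign σ = -1) : alternatingGroup α ≤ N := by
  rw [← closure_three_cycles_eq_alternating, Subgroup.closure_le]
  intro c hc
  have h3 : 3 ≤ ENat.card α := by
    rw [ENat.card_eq_coe_fintype_card]
    exact_mod_cast hc.card_support ▸ Finset.card_le_univ c.support
  obtain ⟨c₀, hc₀N, hc₀⟩ := exists_isThreeCycle_mem hσ hs h3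
  obtain ⟨u, rfl⟩ := isConj_iff.1 (isConj_iff_cycleType_eq.2 (hc₀.trans hc.symm))
  exact Subgroup.Normal.conj_mem ‹_› _ hc₀N u

theorem eq_top_of_sign_eq_neg_one [Fintype α] {σ : Perm α} (hσ : σ ∈ N)
    (hs : sign σ = -1) : N = ⊤ := by
  refine eq_top_iff.2 fun τ _ => ?_
  have hA := alternatingGroup_le_of_sign_eq_neg_one hσ hs
  rcases Int.units_eq_one_or (sign τ) with hτ | hτ
  · exact hA hτ
  · have : τ * σ⁻¹ ∈ N := hA (by simp [mem_alternatingGroup, hτ, hs])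
    simpa using N.mul_mem this hσ

end Equiv.Perm

theorem stmt0_general {G : Type*} [Group G] (n r : ℕ)
    (α : Fin r → (G →* Equiv.Perm (Fin n)))
    (hα : ∀ i, Function.Surjective (α i))
    (hβ : Function.Surjective
      (fun g => (fun i => Equiv.Perm.sign ((α i) g)) : G → Fin r → ℤˣ)) :
    Function.Surjective
      (fun g => (fun i => (α i) g) : G → Fin r → Equiv.Perm (Fin n)) := by
  induction r with
  | zero => exact fun x => ⟨1, funext fun i => i.elim0⟩
  | succ k ih =>
    let f := MonoidHom.pi fun i : Fin k => α i.succ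
    have hf : Surjective f := ih (fun i => α i.succ) (fun i => hα i.succ) fun v => by
      obtain ⟨g, hg⟩ := hβ (Fin.cons 1 v)
      exact ⟨g, funext fun i => by simpa using congrFun hg i.succ⟩
    obtain ⟨w, hw⟩ := hβ (Fin.cons (-1) 1)
    obtain ⟨g₀, hg₀, hodd⟩ := Perm.exists_mem_ker_sign_eq_neg_one hf (α 0) (g := w)
      (fun i => by simpa [f] using congrFun hw i.succ) (by simpa using congrFun hw 0)
    have : (f.ker.map (α 0)).Normal := f.normal_ker.map _ (hα 0)
    have htop := Perm.eq_top_of_sign_eq_neg_one (Subgroup.mem_map_of_mem _ hg₀) hodd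
    intro x
    obtain ⟨g, hg⟩ := MonoidHom.prod_surjective_of_map_ker_eq_top hf htop (Fin.tail x, x 0)
    refine ⟨g, funext fun i => Fin.cases ?_ (fun j => ?_) i⟩
    · exact congrArg Prod.snd hg
    · exact congrFun (congrArg Prod.fst hg) j

/-- If each `α i : G → Sₙ` is surjective and the induced map to `(ℤ/2)^r` given by
signs is surjective, then the product map `G → Sₙ^r` is surjective. -/
theorem stmt0 {G : Type*} [Group G] (n r : ℕ) (hn : 1 ≤ n)
    (α : Fin r → (G →* Equiv.Perm (Fin n)))
    (hα : ∀ i, Function.Surjective (α i))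
    (hβ : Function.Surjective
      (fun g => (fun i => Equiv.Perm.sign ((α i) g)) : G → Fin r → ℤˣ)) :
    Function.Surjective
      (fun g => (fun i => (α i) g) : G → Fin r → Equiv.Perm (Fin n)) :=
  stmt0_general n r α hα hβ
end

section
/- Let $K$ be a field and let $A_1, \ldots, A_n$ be algebraically independent transcendentals over $K$. Then the Galois group of the generic polynomial $g(X) = X^n + A_1 X^{n-1} + \cdots + A_n$ over the field $K(A_1, \ldots, A_n)$ is isomorphic to the full symmetric group $S_n$. -/
/-!
Send `Aᵢ` to the elementary symmetric polynomial `eᵢ(x₁, …, xₙ)`. By the fundamental theorem on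
symmetric polynomials this embeds `K(A₁, …, Aₙ)` into `K(x₁, …, xₙ)`, and by Vieta's formulas `g`
becomes `∏ (X + xᵢ)` there, with the `n` distinct roots `-xᵢ`. A permutation of the variables is
an automorphism of `K(x₁, …, xₙ)` fixing the symmetric functions, hence fixing `K(A₁, …, Aₙ)`; so
every permutation of the roots comes from the Galois group, which acts faithfully on the roots.
-/

open Polynomial

namespace Polynomial.Gal

variable {F E : Type*} [Field F] [Field E] [Algebra F E] {p : F[X]}
  [Fact (p.map (algebraMap F E)).Splits]

theorem galActionHom_bijective_of_forall_exists
    (h : ∀ σ : Equiv.Perm (p.rootSet E), ∃ φ : Gal(E/F), ∀ x : p.rootSet E, φ x = σ x) :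
    Function.Bijective (galActionHom p E) := by
  refine ⟨galActionHom_injective p E, fun σ => ?_⟩
  obtain ⟨φ, hφ⟩ := h σ
  exact ⟨restrict p E φ,
    Equiv.ext fun x => Subtype.ext ((galActionHom_restrict p E φ x).trans (hφ x))⟩

end Polynomial.Gal

namespace GenericPolynomial

open MvPolynomial (esymm esymmAlgHom symmetricSubalgebra rename)

section CommSemiring

variable (R : Type*) [CommSemiring R] (n : ℕ)

noncomputable def genericMonic : (MvPolynomial (Fin n) R)[X] :=
  X ^ n + ∑ i : Fin n, C (MvPolynomial.X i) * X ^ (n - 1 - (i : ℕ))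

noncomputable def esymmSubst : MvPolynomial (Fin n) R →ₐ[R] MvPolynomial (Fin n) R :=
  (symmetricSubalgebra (Fin n) R).val.comp (esymmAlgHom (Fin n) R n)

theorem esymmSubst_X (i : Fin n) :
    esymmSubst R n (MvPolynomial.X i) = esymm (Fin n) R (i + 1) := by
  simp [esymmSubst, esymmAlgHom]

theorem rename_esymmSubst (e : Equiv.Perm (Fin n)) (p : MvPolynomial (Fin n) R) :
    rename e (esymmSubst R n p) = esymmSubst R n p :=
  (esymmAlgHom (Fin n) R n p).2 e

theorem map_esymmSubst_genericMonic :
    (genericMonic R n).map (esymmSubst R n).toRingHom =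
      ∏ i : Fin n, (X + C (MvPolynomial.X i)) := by
  rw [MvPolynomial.prod_C_add_X_eq_sum_esymm, Fintype.card_fin, Finset.sum_range_succ',
    MvPolynomial.esymm_zero, C_1, one_mul, Nat.sub_zero, add_comm, genericMonic,
    Polynomial.map_add, Polynomial.map_pow, Polynomial.map_X, Polynomial.map_sum,
    ← Fin.sum_univ_eq_sum_range (fun i => C (esymm (Fin n) R (i + 1)) * X ^ (n - (i + 1)))]
  simp [esymmSubst_X, Nat.sub_sub, add_comm]

end CommSemiring

theorem esymmSubst_injective (R : Type*) [CommRing R] (n : ℕ) :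
    Function.Injective (esymmSubst R n) :=
  Subtype.val_injective.comp (MvPolynomial.esymmAlgHom_fin_injective R le_rfl)

variable (K : Type*) [Field K] (n : ℕ)

/-- A copy of `K(x₁, …, xₙ)`, distinct from the coefficient field `K(A₁, …, Aₙ)` so that it can
carry the algebra structure `Aᵢ ↦ eᵢ(x)` as an instance. -/
def RootField : Type _ := FractionRing (MvPolynomial (Fin n) K)

noncomputable instance : Field (RootField K n) := inferInstanceAs (Field (FractionRing _))

noncomputable instance : Algebra (MvPolynomial (Fin n) K) (RootField K n) :=
  inferInstanceAs (Algebra _ (FractionRing _))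

instance : IsFractionRing (MvPolynomial (Fin n) K) (RootField K n) :=
  inferInstanceAs (IsFractionRing _ (FractionRing _))

noncomputable instance : Algebra (FractionRing (MvPolynomial (Fin n) K)) (RootField K n) :=
  (IsFractionRing.lift (g := (algebraMap _ (RootField K n)).comp (esymmSubst K n).toRingHom)
    ((IsFractionRing.injective _ _).comp (esymmSubst_injective K n))).toAlgebra

theorem algebraMap_algebraMap (p : MvPolynomial (Fin n) K) :
    algebraMap (FractionRing (MvPolynomial (Fin n) K)) (RootField K n) (algebraMap _ _ p) =
      algebraMap _ (RootField K n) (esymmSubst K n p) :=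
  IsFractionRing.lift_algebraMap _ _

noncomputable def root (i : Fin n) : RootField K n :=
  -algebraMap (MvPolynomial (Fin n) K) _ (MvPolynomial.X i)

theorem root_injective : Function.Injective (root K n) :=
  neg_injective.comp ((IsFractionRing.injective _ _).comp MvPolynomial.X_injective)

local notation "K(A)" => FractionRing (MvPolynomial (Fin n) K)

theorem map_map_genericMonic :
    ((genericMonic K n).map (algebraMap _ K(A))).map (algebraMap K(A) (RootField K n)) =
      ∏ i : Fin n, (X - C (root K n i)) := by
  have : (algebraMap K(A) (RootField K n)).comp (algebraMap _ K(A)) =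
      (algebraMap _ (RootField K n)).comp (esymmSubst K n).toRingHom :=
    RingHom.ext (algebraMap_algebraMap K n)
  rw [Polynomial.map_map, this, ← Polynomial.map_map, map_esymmSubst_genericMonic,
    Polynomial.map_prod]
  simp [root]

theorem splits_genericMonic :
    (((genericMonic K n).map (algebraMap _ K(A))).map
      (algebraMap K(A) (RootField K n))).Splits := by
  rw [map_map_genericMonic]
  exact Splits.prod fun i _ => Splits.X_sub_C _

theorem rootSet_genericMonic :
    ((genericMonic K n).map (algebraMap _ K(A))).rootSet (RootField K n) =
      Set.range (root K n) := by
  ext x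
  rw [mem_rootSet', aeval_def, ← eval_map, map_map_genericMonic, eval_prod,
    Finset.prod_eq_zero_iff]
  simp only [eval_sub, eval_X, eval_C, sub_eq_zero, Finset.mem_univ, true_and, Set.mem_range,
    (monic_prod_of_monic _ _ fun i _ => monic_X_sub_C (root K n i)).ne_zero, ne_eq,
    not_false_eq_true, eq_comm]

noncomputable def permAlgEquiv (e : Equiv.Perm (Fin n)) : RootField K n ≃ₐ[K(A)] RootField K n :=
  AlgEquiv.ofRingEquiv
    (f := IsFractionRing.ringEquivOfRingEquiv (MvPolynomial.renameEquiv K e).toRingEquiv)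
    fun a => by
      obtain ⟨p, q, -, rfl⟩ := IsFractionRing.div_surjective (A := MvPolynomial (Fin n) K) a
      simp [algebraMap_algebraMap, rename_esymmSubst]

theorem permAlgEquiv_root (e : Equiv.Perm (Fin n)) (i : Fin n) :
    permAlgEquiv K n e (root K n i) = root K n (e i) := by
  simp [permAlgEquiv, root]

end GenericPolynomial

open GenericPolynomial in
theorem stmt6_general (K : Type*) [Field K] (n : ℕ)
    (g : Polynomial (FractionRing (MvPolynomial (Fin n) K)))
    (hg : g = Polynomial.X ^ n + ∑ i : Fin n, Polynomial.C
        (algebraMap (MvPolynomial (Fin n) K) (FractionRing (MvPolynomial (Fin n) K))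
          (MvPolynomial.X i)) * Polynomial.X ^ (n - 1 - (i : ℕ))) :
    Nonempty (g.Gal ≃* Equiv.Perm (Fin n)) := by
  have hg' : g = (genericMonic K n).map (algebraMap _ _) := by
    simp [hg, genericMonic, Polynomial.map_sum]
  subst hg'
  have := Fact.mk (splits_genericMonic K n)
  let rootEquiv : Fin n ≃ _ := (Equiv.ofInjective _ (root_injective K n)).trans
    (Equiv.setCongr (rootSet_genericMonic K n).symm)
  have hbij := Polynomial.Gal.galActionHom_bijective_of_forall_exists fun σ =>
    ⟨permAlgEquiv K n (rootEquiv.symm.permCongr σ), fun x => by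
      obtain ⟨i, rfl⟩ := rootEquiv.surjective x
      simp [rootEquiv, permAlgEquiv_root, Equiv.apply_ofInjective_symm]⟩
  exact ⟨(MulEquiv.ofBijective _ hbij).trans rootEquiv.symm.permCongrHom⟩

/-- The Galois group of the generic polynomial
`Xⁿ + A₁ Xⁿ⁻¹ + ⋯ + Aₙ` over `K(A₁, …, Aₙ)` is the full symmetric group `Sₙ`. -/
theorem stmt6 (K : Type*) [Field K] (n : ℕ) (hn : 1 ≤ n)
    (g : Polynomial (FractionRing (MvPolynomial (Fin n) K)))
    (hg : g = Polynomial.X ^ n + ∑ i : Fin n, Polynomial.C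
        (algebraMap (MvPolynomial (Fin n) K) (FractionRing (MvPolynomial (Fin n) K))
          (MvPolynomial.X i)) * Polynomial.X ^ (n - 1 - (i : ℕ))) :
    Nonempty (g.Gal ≃* Equiv.Perm (Fin n)) :=
  stmt6_general K n g hg
end

section
/- Let $n \geq 1$, let $\Omega$ be a finite set of cardinality $\nu$, let $\sigma \in \mathrm{Sym}(\Omega)$, let $G = \langle \sigma \rangle$, and let $\Omega = \Omega_1 \sqcup \cdots \sqcup \Omega_r$ be the decomposition into $G$-orbits. In the wreath product $H = S_n \wr_\Omega G$, the set $T = \{\eta\sigma : \eta \in S_n^\Omega,\ \eta\sigma \text{ acts transitively on } [n] \times \Omega_i \text{ for every } i\}$ has cardinality $|T| = (n!)^\nu / n^r$. -/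
/-! The fibre of `ησ` over `ω` comes back to itself after `period σ ω` steps, and `ησ` is transitive
on `[n] × Ωᵢ` iff this return map, the product of the values of `η` along the cycle of `ω`, is an
`n`-cycle; transitivity on one fibre of `Ωᵢ` propagates along the cycle. Choose one base point `b`
in each cycle. The return map at `b` is `η b` times a product of values of `η` away from the base
points, so `η ↦ (return maps at the base points, η elsewhere)` is a bijection of `Sₙ^Ω`, and the
count is `((n-1)!)^r (n!)^(ν-r)`, there being `(n-1)!` cycles of length `n` in `Sₙ`. -/

open Equiv Equiv.Perm MulAction

section SkewProduct

variable {α Ω : Type*} (σ : Perm Ω) (η : Ω → Perm α)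

def skewPerm : Perm (α × Ω) :=
  (prodComm α Ω).trans ((prodShear σ fun ω => η (σ ω)).trans (prodComm Ω α))

@[simp]
lemma skewPerm_apply (k : α) (ω : Ω) : skewPerm σ η (k, ω) = (η (σ ω) k, σ ω) := rfl

def cocycle : ℕ → Ω → Perm α
  | 0, _ => 1
  | m + 1, ω => η ((σ ^ (m + 1)) ω) * cocycle m ω

lemma skewPerm_pow_apply (m : ℕ) (k : α) (ω : Ω) :
    (skewPerm σ η ^ m) (k, ω) = (cocycle σ η m ω k, (σ ^ m) ω) := by
  induction m with
  | zero => rfl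
  | succ m ih => rw [pow_succ', mul_apply, ih, skewPerm_apply, ← mul_apply σ, ← pow_succ']; rfl

lemma pow_apply_eq_self_iff_period_dvd {m : ℕ} {ω : Ω} : (σ ^ m) ω = ω ↔ period σ ω ∣ m := by
  rw [← pow_smul_eq_iff_period_dvd, Perm.smul_def]

lemma cocycle_add (a b : ℕ) (ω : Ω) :
    cocycle σ η (a + b) ω = cocycle σ η b ((σ ^ a) ω) * cocycle σ η a ω := by
  induction b with
  | zero => exact (one_mul _).symm
  | succ b ih =>
    rw [← add_assoc, cocycle, cocycle, ih, mul_assoc, ← mul_apply, ← pow_add, add_comm (b + 1),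
      ← add_assoc]

lemma cocycle_congr {η η' : Ω → Perm α} {m : ℕ} {ω : Ω}
    (h : ∀ j, 1 ≤ j → j ≤ m → η ((σ ^ j) ω) = η' ((σ ^ j) ω)) :
    cocycle σ η m ω = cocycle σ η' m ω := by
  induction m with
  | zero => rfl
  | succ m ih =>
    rw [cocycle, cocycle, h (m + 1) le_add_self le_rfl, ih fun j h1 h2 => h j h1 (by omega)]

noncomputable def returnPerm (ω : Ω) : Perm α := cocycle σ η (period σ ω) ω

lemma cocycle_period_mul (j : ℕ) (ω : Ω) :
    cocycle σ η (period σ ω * j) ω = returnPerm σ η ω ^ j := by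
  induction j with
  | zero => rfl
  | succ j ih =>
    have hfix := (pow_apply_eq_self_iff_period_dvd σ).mpr (dvd_mul_right (period σ ω) j)
    rw [mul_add_one, cocycle_add, ih, hfix, pow_succ', returnPerm]

lemma returnPerm_eq_mul_cocycle [Finite Ω] (ω : Ω) :
    returnPerm σ η ω = η ω * cocycle σ η (period σ ω - 1) ω := by
  have hpos := period_pos_of_orderOf_pos (orderOf_pos σ) ω
  rw [returnPerm]
  conv_lhs => rw [← Nat.sub_add_cancel hpos, cocycle, Nat.sub_add_cancel hpos]
  rw [(pow_apply_eq_self_iff_period_dvd σ).mpr dvd_rfl]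

variable [Finite Ω]

theorem sameCycle_skewPerm_fibre_iff_isCycleOn [Finite α] (ω : Ω) :
    (∀ k k' : α, SameCycle (skewPerm σ η) (k, ω) (k', ω)) ↔
      (returnPerm σ η ω).IsCycleOn Set.univ := by
  refine ⟨fun h => ⟨Set.bijOn_univ.mpr (Equiv.bijective _), fun k _ k' _ => ?_⟩,
    fun h k k' => ?_⟩
  · obtain ⟨m, hm⟩ := (h k k').exists_nat_pow_eq
    rw [skewPerm_pow_apply, Prod.mk.injEq] at hm
    obtain ⟨j, rfl⟩ := (pow_apply_eq_self_iff_period_dvd σ).mp hm.2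
    rw [cocycle_period_mul] at hm
    exact ⟨j, by simpa using hm.1⟩
  · obtain ⟨j, hj⟩ := (h.2 (Set.mem_univ k) (Set.mem_univ k')).exists_nat_pow_eq
    refine ⟨(period σ ω * j : ℕ), ?_⟩
    rw [zpow_natCast, skewPerm_pow_apply, cocycle_period_mul, hj,
      (pow_apply_eq_self_iff_period_dvd σ).mpr (dvd_mul_right _ _)]

theorem sameCycle_skewPerm_fibre_of_sameCycle {ω ω' : Ω} (hω : SameCycle σ ω ω')
    (h : ∀ k k' : α, SameCycle (skewPerm σ η) (k, ω) (k', ω)) (k k' : α) :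
    SameCycle (skewPerm σ η) (k, ω') (k', ω') := by
  obtain ⟨m, rfl⟩ := hω.exists_nat_pow_eq
  have hlift (k : α) : (k, (σ ^ m) ω) = (skewPerm σ η ^ m) ((cocycle σ η m ω)⁻¹ k, ω) := by
    rw [skewPerm_pow_apply, ← mul_apply, mul_inv_cancel, one_apply]
  rw [hlift k, hlift k', sameCycle_pow_left, sameCycle_pow_right]
  exact h _ _

theorem forall_sameCycle_skewPerm_iff_forall_fibre :
    (∀ p q : α × Ω, SameCycle σ p.2 q.2 → SameCycle (skewPerm σ η) p q) ↔
      ∀ ω, ∀ k k' : α, SameCycle (skewPerm σ η) (k, ω) (k', ω) := by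
  refine ⟨fun h ω k k' => h (k, ω) (k', ω) (SameCycle.refl σ ω), ?_⟩
  rintro h ⟨k, ω⟩ ⟨k', ω'⟩ (hω : SameCycle σ ω ω')
  obtain ⟨m, rfl⟩ := hω.exists_nat_pow_eq
  have hstep : SameCycle (skewPerm σ η) (k, ω) (cocycle σ η m ω k, (σ ^ m) ω) := by
    rw [← skewPerm_pow_apply]
    exact sameCycle_pow_right.mpr (SameCycle.refl _ _)
  exact hstep.trans (h _ _ _)

end SkewProduct

structure IsCycleTransversal {Ω : Type*} (σ : Perm Ω) (B : Set Ω) : Prop where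
  exists_sameCycle : ∀ ω, ∃ b ∈ B, SameCycle σ b ω
  eq_of_sameCycle : ∀ ⦃b⦄, b ∈ B → ∀ ⦃b'⦄, b' ∈ B → SameCycle σ b b' → b = b'

section Transversal

variable {Ω : Type*} {σ : Perm Ω} {B : Set Ω}

lemma sameCycle_iff_orbitRel {x y : Ω} :
    SameCycle σ x y ↔ orbitRel (Subgroup.zpowers σ) Ω x y := by
  rw [sameCycle_comm, orbitRel_apply, mem_orbit_iff, Subgroup.exists_zpowers]
  rfl

variable (σ) in
lemma isCycleTransversal_range_out :
    IsCycleTransversal σ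
      (Set.range (Quotient.out : orbitRel.Quotient (Subgroup.zpowers σ) Ω → Ω)) where
  exists_sameCycle ω := ⟨_, Set.mem_range_self _, sameCycle_iff_orbitRel.mpr (Quotient.mk_out ω)⟩
  eq_of_sameCycle := by
    rintro _ ⟨q, rfl⟩ _ ⟨q', rfl⟩ h
    rw [← Quotient.out_eq q, ← Quotient.out_eq q', Quotient.sound (sameCycle_iff_orbitRel.mp h)]

lemma IsCycleTransversal.pow_apply_notMem (hB : IsCycleTransversal σ B) {b : Ω} (hb : b ∈ B)
    {j : ℕ} (hj : 1 ≤ j) (hjb : j < period σ b) : (σ ^ j) b ∉ B := fun hjB => by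
  have hfix := hB.eq_of_sameCycle hjB hb ⟨-(j : ℤ), by simp⟩
  have := Nat.le_of_dvd hj ((pow_apply_eq_self_iff_period_dvd σ).mp hfix)
  omega

theorem forall_sameCycle_skewPerm_iff_isCycleOn_returnPerm {α : Type*} [Finite α] [Finite Ω]
    (hB : IsCycleTransversal σ B) (η : Ω → Perm α) :
    (∀ p q : α × Ω, SameCycle σ p.2 q.2 → SameCycle (skewPerm σ η) p q) ↔
      ∀ b ∈ B, (returnPerm σ η b).IsCycleOn Set.univ := by
  simp only [forall_sameCycle_skewPerm_iff_forall_fibre, ← sameCycle_skewPerm_fibre_iff_isCycleOn]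
  refine ⟨fun h b _ => h b, fun h ω => ?_⟩
  obtain ⟨b, hb, hbω⟩ := hB.exists_sameCycle ω
  exact sameCycle_skewPerm_fibre_of_sameCycle σ η hbω (h b hb)

end Transversal

section Shear

variable {Ω G : Type*} [Group G] (B : Set Ω) [DecidablePred (· ∈ B)]

/-- Invertible because the factor `R η` can be recomputed from the image, which agrees with `η`
off `B`. -/
def Pi.mulShear (R : (Ω → G) → Ω → G)
    (hR : ∀ η η', (∀ x ∉ B, η x = η' x) → ∀ b ∈ B, R η b = R η' b) : (Ω → G) ≃ (Ω → G) where
  toFun η ω := if ω ∈ B then η ω * R η ω else η ω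
  invFun ξ ω := if ω ∈ B then ξ ω * (R ξ ω)⁻¹ else ξ ω
  left_inv η := by
    funext ω
    by_cases hω : ω ∈ B
    · simp only [if_pos hω]
      rw [hR _ η (fun x hx => if_neg hx) ω hω, mul_inv_cancel_right]
    · simp only [if_neg hω]
  right_inv ξ := by
    funext ω
    by_cases hω : ω ∈ B
    · simp only [if_pos hω]
      rw [hR _ ξ (fun x hx => if_neg hx) ω hω, inv_mul_cancel_right]
    · simp only [if_neg hω]

lemma Pi.mulShear_apply_of_mem (R : (Ω → G) → Ω → G)
    (hR : ∀ η η', (∀ x ∉ B, η x = η' x) → ∀ b ∈ B, R η b = R η' b) (η : Ω → G) {b : Ω}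
    (hb : b ∈ B) : Pi.mulShear B R hR η b = η b * R η b :=
  if_pos hb

end Shear

section Counting

variable {α Ω : Type*}

theorem exists_equiv_apply_eq_returnPerm [Finite Ω] {σ : Perm Ω} {B : Set Ω}
    (hB : IsCycleTransversal σ B) :
    ∃ e : (Ω → Perm α) ≃ (Ω → Perm α), ∀ η, ∀ b ∈ B, e η b = returnPerm σ η b := by
  classical
  have hR : ∀ η η' : Ω → Perm α, (∀ x ∉ B, η x = η' x) → ∀ b ∈ B,
      cocycle σ η (period σ b - 1) b = cocycle σ η' (period σ b - 1) b := by
    intro η η' h b hb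
    have hpos := period_pos_of_orderOf_pos (orderOf_pos σ) b
    exact cocycle_congr σ fun j hj hjb => h _ (hB.pow_apply_notMem hb hj (by omega))
  exact ⟨Pi.mulShear B _ hR, fun η b hb => by
    rw [Pi.mulShear_apply_of_mem, returnPerm_eq_mul_cocycle]; exact hb⟩

lemma Nat.card_subtype_fun_forall_mem [Finite Ω] {β : Type*} (B : Set Ω) (p : β → Prop) :
    Nat.card {f : Ω → β // ∀ ω ∈ B, p (f ω)} =
      Nat.card {b // p b} ^ Nat.card B * Nat.card β ^ (Nat.card Ω - Nat.card B) := by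
  classical
  let e : {f : Ω → β // ∀ ω ∈ B, p (f ω)} ≃ (B → {b // p b}) × ({ω // ω ∉ B} → β) :=
    ((Equiv.subtypeEquiv (q := fun g => ∀ b : B, p (g.1 b))
      (Equiv.piEquivPiSubtypeProd (· ∈ B) fun _ => β) fun f =>
      ⟨fun h b => h b b.2, fun h ω hω => h ⟨ω, hω⟩⟩).trans
        (Equiv.prodSubtypeFstEquivSubtypeProd (p := fun g : B → β => ∀ b, p (g b)))).trans
      (Equiv.prodCongr Equiv.subtypePiEquivPi (Equiv.refl _))
  rw [Nat.card_congr e, Nat.card_prod, Nat.card_fun, Nat.card_fun, Nat.card_coe_set_eq B,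
    ← Set.ncard_compl]
  rfl

theorem isCycleOn_univ_iff_cycleType [Fintype α] [DecidableEq α] [Nontrivial α] {c : Perm α} :
    c.IsCycleOn Set.univ ↔ c.cycleType = {Fintype.card α} := by
  constructor
  · intro h
    have hsupp : c.support = Finset.univ := Finset.eq_univ_of_forall fun x =>
      mem_support.mpr (h.apply_ne Set.nontrivial_univ (Set.mem_univ x))
    have hcycle : c.IsCycle :=
      isCycle_iff_exists_isCycleOn.mpr ⟨_, Set.nontrivial_univ, h, fun x _ => trivial⟩
    rw [hcycle.cycleType, hsupp, Finset.card_univ]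
  · intro h
    have hcycle : c.IsCycle := card_cycleType_eq_one.mp (by rw [h, Multiset.card_singleton])
    have hsupp : c.support = Finset.univ := Finset.eq_univ_of_card _ (by
      rw [← sum_cycleType, h, Multiset.sum_singleton])
    convert hcycle.isCycleOn
    ext x
    simpa using (Finset.ext_iff.mp hsupp x).symm

theorem card_isCycleOn_univ [Fintype α] [DecidableEq α] :
    Nat.card {c : Perm α // c.IsCycleOn Set.univ} = (Fintype.card α - 1).factorial := by
  rcases le_or_gt (Fintype.card α) 1 with h | h
  · have := Fintype.card_le_one_iff_subsingleton.mp h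
    rw [Nat.sub_eq_zero_of_le h, Nat.factorial_zero]
    have : Nonempty {c : Perm α // c.IsCycleOn Set.univ} := ⟨⟨1, isCycleOn_of_subsingleton _ _⟩⟩
    exact Nat.card_unique
  · have := Fintype.one_lt_card_iff_nontrivial.mp h
    rw [Nat.card_congr (Equiv.subtypeEquivRight fun c => isCycleOn_univ_iff_cycleType),
      Nat.card_eq_fintype_card, Fintype.card_subtype, card_of_cycleType_singleton h le_rfl,
      Nat.choose_self, mul_one]

theorem card_setOf_forall_sameCycle_skewPerm [Fintype α] [DecidableEq α] [Finite Ω]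
    {σ : Perm Ω} {B : Set Ω} (hB : IsCycleTransversal σ B) :
    Nat.card {η : Ω → Perm α |
        ∀ p q : α × Ω, SameCycle σ p.2 q.2 → SameCycle (skewPerm σ η) p q} =
      (Fintype.card α - 1).factorial ^ Nat.card B *
        (Fintype.card α).factorial ^ (Nat.card Ω - Nat.card B) := by
  obtain ⟨e, he⟩ := exists_equiv_apply_eq_returnPerm (α := α) hB
  rw [← card_isCycleOn_univ, ← Fintype.card_perm, ← Nat.card_eq_fintype_card,
    ← Nat.card_subtype_fun_forall_mem B fun c : Perm α => c.IsCycleOn Set.univ]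
  refine Nat.card_congr (e.subtypeEquiv fun η => ?_)
  exact (forall_sameCycle_skewPerm_iff_isCycleOn_returnPerm hB η).trans
    (forall₂_congr fun b hb => by rw [he η b hb])

end Counting

lemma factorial_pred_pow_mul_factorial_pow {n r ν : ℕ} (hn : 1 ≤ n) (hr : r ≤ ν) :
    (n - 1).factorial ^ r * n.factorial ^ (ν - r) = n.factorial ^ ν / n ^ r := by
  have h : n.factorial ^ ν = n ^ r * ((n - 1).factorial ^ r * n.factorial ^ (ν - r)) := by
    calc n.factorial ^ ν = n.factorial ^ r * n.factorial ^ (ν - r) := by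
          rw [← pow_add, Nat.add_sub_cancel' hr]
      _ = (n * (n - 1).factorial) ^ r * n.factorial ^ (ν - r) := by
          rw [Nat.mul_factorial_pred (by omega)]
      _ = n ^ r * ((n - 1).factorial ^ r * n.factorial ^ (ν - r)) := by ring
  rw [h, Nat.mul_div_cancel_left _ (by positivity)]

/-- In the wreath product `Sₙ ≀_Ω ⟨σ⟩`, the set `T` of elements `ησ`
(`η ∈ Sₙ^Ω`, acting on `[n] × Ω` by `(k, ω) ↦ (η(σω).k, σω)`) that act
transitively on `[n] × Ωᵢ` for every `⟨σ⟩`-orbit `Ωᵢ` has cardinality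
`(n!)^ν / n^r`, where `ν = |Ω|` and `r` is the number of orbits. -/
theorem stmt9 {Ω : Type*} [Fintype Ω] (n ν r : ℕ) (hn : 1 ≤ n)
    (hν : Fintype.card Ω = ν) (σ : Equiv.Perm Ω)
    (hr : r = Nat.card (MulAction.orbitRel.Quotient (Subgroup.zpowers σ) Ω))
    (w : (Ω → Equiv.Perm (Fin n)) → Equiv.Perm (Fin n × Ω))
    (hw : ∀ (η : Ω → Equiv.Perm (Fin n)) (k : Fin n) (ω : Ω),
      w η (k, ω) = ((η (σ ω)) k, σ ω)) :
    Nat.card {η : Ω → Equiv.Perm (Fin n) |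
        ∀ p q : Fin n × Ω, (∃ k : ℤ, (σ ^ k) p.2 = q.2) →
          ∃ m : ℤ, ((w η) ^ m) p = q}
      = n.factorial ^ ν / n ^ r := by
  obtain rfl : w = skewPerm σ := funext fun η => Equiv.ext fun p => hw η p.1 p.2
  have hB := isCycleTransversal_range_out σ
  have hcardB : Nat.card (Set.range Quotient.out) = r :=
    hr ▸ Nat.card_range_of_injective Quotient.out_injective
  have hcardΩ : Nat.card Ω = ν := Nat.card_eq_fintype_card.trans hν
  refine (card_setOf_forall_sameCycle_skewPerm hB).trans ?_
  rw [Fintype.card_fin, hcardB, hcardΩ]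
  refine factorial_pred_pow_mul_factorial_pow hn ?_
  rw [← hcardB, ← hcardΩ]
  exact Finite.card_subtype_le _
end

section
/- Let $n \geq 1$, let $\Omega$ be a finite set, let $\sigma \in \mathrm{Sym}(\Omega)$, let $G = \langle \sigma \rangle$, and let $\Omega = \Omega_1 \sqcup \cdots \sqcup \Omega_r$ be the $G$-orbit decomposition. Then the normal subgroup $S_n^\Omega$ of $S_n \wr_\Omega G$ acts transitively by conjugation on the set $T$ of elements of the form $\eta\sigma$ ($\eta \in S_n^\Omega$) that act transitively on every $[n] \times \Omega_i$. -/
/-!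
Both `ησ` and `η'σ` lie over `σ`, and transitivity on each `[n] × Ωᵢ` says that their cycles
are exactly these sets. Two permutations with the same cycles have the same period at every point
(the period being the cycle length), so after choosing a base point `r` in each cycle,
`(η'σ)ᵐ r ↦ (ησ)ᵐ r` is a well-defined bijection conjugating `η'σ` to `ησ`. As both lie over `σ`,
it preserves the `Ω`-coordinate, i.e. it lies in `Sₙ^Ω`.
-/

open Function

namespace Equiv.Perm

variable {X : Type*} {a b : Perm X}

theorem _root_.Function.Semiconj.perm_zpow {Y : Type*} {π : X → Y} {σ : Perm Y}
    (h : Semiconj π a σ) : ∀ m : ℤ, Semiconj π ⇑(a ^ m) ⇑(σ ^ m)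
  | .ofNat k => by simpa only [Int.ofNat_eq_natCast, zpow_natCast, coe_pow] using h.iterate_right k
  | .negSucc k => by
    simpa only [zpow_negSucc, ← inv_pow, coe_pow, coe_inv] using
      (h.inverses_right a.apply_symm_apply σ.symm_apply_apply).iterate_right (k + 1)

theorem sameCycle_iff_of_semiconj {Y : Type*} {π : X → Y} {σ : Perm Y} (ha : Semiconj π a σ)
    (htrans : ∀ x y, σ.SameCycle (π x) (π y) → a.SameCycle x y) (x y : X) :
    a.SameCycle x y ↔ σ.SameCycle (π x) (π y) :=
  ⟨fun ⟨m, hm⟩ => ⟨m, by rw [← hm, ha.perm_zpow]⟩, htrans x y⟩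

theorem orbit_zpowers_eq_setOf_sameCycle (a : Perm X) (x : X) :
    MulAction.orbit (Subgroup.zpowers a) x = {y | a.SameCycle x y} := by
  ext y
  constructor
  · rintro ⟨⟨_, m, rfl⟩, rfl⟩
    exact ⟨m, rfl⟩
  · rintro ⟨m, rfl⟩
    exact ⟨⟨a ^ m, m, rfl⟩, rfl⟩

theorem minimalPeriod_eq_of_sameCycle_iff [Finite X] {x : X}
    (h : ∀ y, a.SameCycle x y ↔ b.SameCycle x y) : minimalPeriod a x = minimalPeriod b x := by
  classical
  have := Fintype.ofFinite X
  have hab : MulAction.orbit (Subgroup.zpowers a) x = MulAction.orbit (Subgroup.zpowers b) x := by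
    simp only [orbit_zpowers_eq_setOf_sameCycle, h]
  have ha := MulAction.minimalPeriod_eq_card (a := a) (b := x)
  have hb := MulAction.minimalPeriod_eq_card (a := b) (b := x)
  rw [← Nat.card_eq_fintype_card] at ha hb
  exact ha.trans (hab ▸ hb.symm)

theorem zpow_apply_eq_zpow_apply_iff (a : Perm X) (x : X) (i j : ℤ) :
    (a ^ i) x = (a ^ j) x ↔ (a ^ (i - j)) x = x := by
  conv_rhs => rw [← (a ^ j).injective.eq_iff, ← mul_apply, ← zpow_add, add_sub_cancel]

theorem zpow_apply_eq_zpow_apply_iff_of_sameCycle_iff [Finite X] {x : X}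
    (h : ∀ y, a.SameCycle x y ↔ b.SameCycle x y) (i j : ℤ) :
    (a ^ i) x = (a ^ j) x ↔ (b ^ i) x = (b ^ j) x := by
  rw [zpow_apply_eq_zpow_apply_iff, zpow_apply_eq_zpow_apply_iff]
  have ha := MulAction.zpow_smul_eq_iff_minimalPeriod_dvd (a := a) (b := x) (n := i - j)
  have hb := MulAction.zpow_smul_eq_iff_minimalPeriod_dvd (a := b) (b := x) (n := i - j)
  exact ha.trans ((minimalPeriod_eq_of_sameCycle_iff h).symm ▸ hb.symm)

theorem exists_conj_eq_of_sameCycle_iff {Y : Type*} [Finite X] {π : X → Y} {σ : Perm Y}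
    (ha : Semiconj π a σ) (hb : Semiconj π b σ) (h : ∀ x y, a.SameCycle x y ↔ b.SameCycle x y) :
    ∃ ζ : Perm X, (∀ x, π (ζ x) = π x) ∧ ζ⁻¹ * a * ζ = b := by
  let r : X → X := fun x => Quotient.out (Quotient.mk (SameCycle.setoid b) x)
  have hr_eq : ∀ x y, b.SameCycle x y → r x = r y := fun x y hxy =>
    congrArg Quotient.out (Quotient.sound (s := SameCycle.setoid b) hxy)
  have hr : ∀ x, b.SameCycle (r x) x := fun x => Quotient.mk_out (s := SameCycle.setoid b) x
  choose m hm using hr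
  -- `f` sends `(b ^ m) (r x)` to `(a ^ m) (r x)`; it is well defined and injective because
  -- `a` and `b` have the same period at every point.
  let f : X → X := fun x => (a ^ m x) (r x)
  have hf_comm : ∀ x, f (b x) = a (f x) := by
    intro x
    have hrb : r (b x) = r x := (hr_eq _ _ (SameCycle.refl b x |>.apply_right)).symm
    have key : (b ^ m (b x)) (r x) = (b ^ (1 + m x)) (r x) := by
      rw [zpow_add, zpow_one, mul_apply, hm, ← hrb, hm]
    simp only [f, hrb, (zpow_apply_eq_zpow_apply_iff_of_sameCycle_iff (h (r x)) _ _).mpr key,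
      zpow_add, zpow_one, mul_apply]
  have hf_inj : Injective f := by
    intro x y hxy
    have hx : a.SameCycle (r x) (f x) := ⟨m x, rfl⟩
    have hy : a.SameCycle (r y) (f y) := ⟨m y, rfl⟩
    have hrr : r x = r y := hr_eq _ _ <| (SameCycle.symm ⟨m x, hm x⟩).trans <|
      ((h _ _).mp (hx.trans (hxy ▸ hy.symm))).trans ⟨m y, hm y⟩
    have hxy' : (a ^ m x) (r x) = (a ^ m y) (r x) := hxy.trans (by rw [hrr])
    calc x = (b ^ m x) (r x) := (hm x).symm
      _ = (b ^ m y) (r x) := (zpow_apply_eq_zpow_apply_iff_of_sameCycle_iff (h _) _ _).mp hxy'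
      _ = y := by rw [hrr, hm]
  let ζ : Perm X := Equiv.ofBijective f (Finite.injective_iff_bijective.mp hf_inj)
  refine ⟨ζ, fun x => ?_, ?_⟩
  · show π ((a ^ m x) (r x)) = π x
    conv_rhs => rw [← hm x]
    rw [ha.perm_zpow, hb.perm_zpow]
  · rw [mul_assoc, inv_mul_eq_iff_eq_mul]
    ext x
    exact (hf_comm x).symm

variable {A B : Type*}

def fiberPerm (ζ : Perm (A × B)) (hζ : ∀ x, (ζ x).2 = x.2) (y : B) : Perm A where
  toFun k := (ζ (k, y)).1
  invFun k := (ζ.symm (k, y)).1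
  left_inv k := by
    have : ((ζ (k, y)).1, y) = ζ (k, y) := Prod.ext rfl (hζ (k, y)).symm
    simp only [this, symm_apply_apply]
  right_inv k := by
    have hζ_symm : (ζ.symm (k, y)).2 = y := by simpa using (hζ (ζ.symm (k, y))).symm
    have : ((ζ.symm (k, y)).1, y) = ζ.symm (k, y) := Prod.ext rfl hζ_symm.symm
    simp only [this, apply_symm_apply]

theorem prodCongrLeft_fiberPerm (ζ : Perm (A × B)) (hζ : ∀ x, (ζ x).2 = x.2) :
    prodCongrLeft (fiberPerm ζ hζ) = ζ :=
  Equiv.ext fun ⟨k, y⟩ => Prod.ext rfl (hζ (k, y)).symm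

end Equiv.Perm

open Equiv Perm

theorem stmt10_general {Ω : Type*} [Fintype Ω] (n : ℕ)
    (σ : Equiv.Perm Ω)
    (w : (Ω → Equiv.Perm (Fin n)) → Equiv.Perm (Fin n × Ω))
    (hw : ∀ (η : Ω → Equiv.Perm (Fin n)) (k : Fin n) (ω : Ω),
      w η (k, ω) = ((η (σ ω)) k, σ ω))
    (e : (Ω → Equiv.Perm (Fin n)) → Equiv.Perm (Fin n × Ω))
    (he : ∀ (ζ : Ω → Equiv.Perm (Fin n)) (k : Fin n) (ω : Ω),
      e ζ (k, ω) = ((ζ ω) k, ω)) :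
    ∀ η η' : Ω → Equiv.Perm (Fin n),
      (∀ p q : Fin n × Ω, (∃ k : ℤ, (σ ^ k) p.2 = q.2) →
        ∃ m : ℤ, ((w η) ^ m) p = q) →
      (∀ p q : Fin n × Ω, (∃ k : ℤ, (σ ^ k) p.2 = q.2) →
        ∃ m : ℤ, ((w η') ^ m) p = q) →
      ∃ ζ : Ω → Equiv.Perm (Fin n), (e ζ)⁻¹ * (w η) * (e ζ) = w η' := by
  intro η η' hη hη'
  have hw_semiconj : ∀ η, Function.Semiconj Prod.snd (w η) σ := fun η ⟨k, ω⟩ => by rw [hw]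
  have he_eq : ∀ ζ, e ζ = prodCongrLeft ζ := fun ζ => Equiv.ext fun ⟨k, ω⟩ => he ζ k ω
  obtain ⟨ζ, hζ, hconj⟩ := exists_conj_eq_of_sameCycle_iff (hw_semiconj η) (hw_semiconj η')
    fun p q => (sameCycle_iff_of_semiconj (hw_semiconj η) hη p q).trans
      (sameCycle_iff_of_semiconj (hw_semiconj η') hη' p q).symm
  exact ⟨fiberPerm ζ hζ, by rw [he_eq, prodCongrLeft_fiberPerm, hconj]⟩

/-- `Sₙ^Ω` acts transitively by conjugation on the set of elements `ησ` of the
wreath product `Sₙ ≀_Ω ⟨σ⟩` that act transitively on `[n] × Ωᵢ` for every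
`⟨σ⟩`-orbit `Ωᵢ`.  Here `e ζ` is the embedding of `ζ ∈ Sₙ^Ω` into
`Sym([n] × Ω)` and `w η` is the permutation corresponding to `ησ`. -/
theorem stmt10 {Ω : Type*} [Fintype Ω] (n : ℕ) (hn : 1 ≤ n)
    (σ : Equiv.Perm Ω)
    (w : (Ω → Equiv.Perm (Fin n)) → Equiv.Perm (Fin n × Ω))
    (hw : ∀ (η : Ω → Equiv.Perm (Fin n)) (k : Fin n) (ω : Ω),
      w η (k, ω) = ((η (σ ω)) k, σ ω))
    (e : (Ω → Equiv.Perm (Fin n)) → Equiv.Perm (Fin n × Ω))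
    (he : ∀ (ζ : Ω → Equiv.Perm (Fin n)) (k : Fin n) (ω : Ω),
      e ζ (k, ω) = ((ζ ω) k, ω)) :
    ∀ η η' : Ω → Equiv.Perm (Fin n),
      (∀ p q : Fin n × Ω, (∃ k : ℤ, (σ ^ k) p.2 = q.2) →
        ∃ m : ℤ, ((w η) ^ m) p = q) →
      (∀ p q : Fin n × Ω, (∃ k : ℤ, (σ ^ k) p.2 = q.2) →
        ∃ m : ℤ, ((w η') ^ m) p = q) →
      ∃ ζ : Ω → Equiv.Perm (Fin n), (e ζ)⁻¹ * (w η) * (e ζ) = w η' :=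
  stmt10_general n σ w hw e he
end

section
/- Let $K$ be a field of characteristic not $2$, and for a separable polynomial $h \in K[X]$ let $\delta(h) \in K^*/(K^*)^2$ denote the class of its discriminant. Let $T$ be transcendental over $K$, let $n$ be even, let $K$ have characteristic not dividing $n$, and for distinct $\omega_1, \ldots, \omega_m \in K$ set $h_i(X) = X^n - T - \omega_i \in K(T)[X]$. Then the classes $\delta(h_1), \ldots, \delta(h_m) \in K(T)^*/(K(T)^*)^2$ are linearly independent over $\mathbb{F}_2$. -/
/-!
For `h = Xⁿ - a` the product of the differences of distinct roots is `∏ᵣ h'(r) = nⁿ (∏ᵣ r)ⁿ⁻¹`,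
and `∏ᵣ r = -a` since `n` is even, so `Δ(hᵢ) = -nⁿ (T + ωᵢ)ⁿ⁻¹`. A product of these over a
nonempty `S` is a nonzero constant times `∏_{i ∈ S} (T + ωᵢ)ⁿ⁻¹`, which vanishes to the odd
order `n - 1` at `T = -ωᵢ` because the `ωᵢ` are distinct; a square in `K(T)` vanishes to even
order at every point.
-/

open Polynomial

theorem Finset.prod_offDiag_eq_prod_prod_erase {α M : Type*} [DecidableEq α] [CommMonoid M]
    (s : Finset α) (f : α → α → M) :
    ∏ p ∈ s.offDiag, f p.1 p.2 = ∏ a ∈ s, ∏ b ∈ s.erase a, f a b :=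
  Finset.prod_finset_product' _ _ _ fun p => by
    simp only [Finset.mem_offDiag, Finset.mem_erase]; tauto

namespace Polynomial

section Domain

variable {R : Type*} [CommRing R] [IsDomain R]

theorem rootMultiplicity_C_mul {c : R} (hc : c ≠ 0) (p : R[X]) (x : R) :
    rootMultiplicity x (C c * p) = rootMultiplicity x p := by
  rcases eq_or_ne p 0 with rfl | hp
  · simp
  · rw [rootMultiplicity_mul (mul_ne_zero (C_ne_zero.mpr hc) hp), rootMultiplicity_C, zero_add]

theorem rootMultiplicity_prod_X_sub_C_pow {ι : Type*} [DecidableEq ι] {s : Finset ι} {a : ι → R}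
    (ha : Set.InjOn a s) {i : ι} (hi : i ∈ s) (k : ℕ) :
    rootMultiplicity (a i) (∏ j ∈ s, (X - C (a j)) ^ k) = k := by
  have hrest : ¬ IsRoot (∏ j ∈ s.erase i, (X - C (a j)) ^ k) (a i) := by
    simp only [IsRoot, eval_prod, eval_pow, eval_sub, eval_X, eval_C]
    refine Finset.prod_ne_zero_iff.mpr fun j hj => pow_ne_zero _ (sub_ne_zero.mpr ?_)
    obtain ⟨hji, hj⟩ := Finset.mem_erase.mp hj
    exact fun h => hji (ha hj hi h.symm)
  have hmonic : (∏ j ∈ s, (X - C (a j)) ^ k).Monic :=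
    monic_prod_of_monic _ _ fun j _ => (monic_X_sub_C _).pow k
  rw [← Finset.mul_prod_erase s _ hi] at hmonic ⊢
  rw [rootMultiplicity_mul hmonic.ne_zero, rootMultiplicity_X_sub_C_pow,
    rootMultiplicity_eq_zero hrest, add_zero]

theorem even_rootMultiplicity_of_algebraMap_eq_sq {F : Type*} [Field F] [Algebra R[X] F]
    [IsFractionRing R[X] F] {f : R[X]} {u : F} (hf : algebraMap R[X] F f = u ^ 2) (x : R) :
    Even (rootMultiplicity x f) := by
  rcases eq_or_ne f 0 with rfl | hf0
  · simp
  obtain ⟨⟨g, d⟩, hgd⟩ := IsLocalization.surj (nonZeroDivisors R[X]) u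
  have hd : (d : R[X]) ≠ 0 := nonZeroDivisors.coe_ne_zero d
  have hfd : f * d ^ 2 = g ^ 2 := IsFractionRing.injective R[X] F <| by
    simp only [map_mul, map_pow, hf, ← hgd]; ring
  have hg : g ≠ 0 := by
    rintro rfl
    exact mul_ne_zero hf0 (pow_ne_zero 2 hd) (by simpa using hfd)
  have := congrArg (rootMultiplicity x) hfd
  rw [rootMultiplicity_mul (mul_ne_zero hf0 (pow_ne_zero 2 hd)), sq, sq,
    rootMultiplicity_mul (mul_ne_zero hd hd), rootMultiplicity_mul (mul_ne_zero hg hg)] at this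
  exact ⟨rootMultiplicity x g - rootMultiplicity x d, by omega⟩

theorem Splits.prod_offDiag_roots_sub [DecidableEq R] {f : R[X]} (hf : f.Splits)
    (hm : f.Monic) (hnd : f.roots.Nodup) :
    ∏ p ∈ f.roots.toFinset.offDiag, (p.1 - p.2) =
      ∏ r ∈ f.roots.toFinset, eval r (derivative f) := by
  have hval : f.roots.toFinset.val = f.roots :=
    congrArg Finset.val (Multiset.toFinset_eq hnd).symm
  rw [Finset.prod_offDiag_eq_prod_prod_erase]
  refine Finset.prod_congr rfl fun r hr => ?_
  rw [hf.eval_root_derivative hm (Multiset.mem_toFinset.mp hr), Finset.prod_eq_multiset_prod,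
    Finset.erase_val, hval]

end Domain

theorem prod_offDiag_roots_X_pow_sub_C {L : Type*} [Field L] [DecidableEq L] {n : ℕ}
    (hn : Even n) (hnL : (n : L) ≠ 0) {a : L} (ha : a ≠ 0) (hs : (X ^ n - C a).Splits) :
    ∏ p ∈ (X ^ n - C a).roots.toFinset.offDiag, (p.1 - p.2) = -(n : L) ^ n * a ^ (n - 1) := by
  have hn0 : n ≠ 0 := by rintro rfl; simp at hnL
  have hm : (X ^ n - C a).Monic := monic_X_pow_sub_C a hn0
  have hnd := nodup_roots (separable_X_pow_sub_C a hnL ha)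
  have hval : (X ^ n - C a).roots.toFinset.val = (X ^ n - C a).roots :=
    congrArg Finset.val (Multiset.toFinset_eq hnd).symm
  have hcard : (X ^ n - C a).roots.toFinset.card = n := by
    rw [Finset.card, hval, ← hs.natDegree_eq_card_roots, natDegree_X_pow_sub_C]
  have hprod : ∏ r ∈ (X ^ n - C a).roots.toFinset, r = -a := by
    have := hs.coeff_zero_eq_prod_roots_of_monic hm
    rw [natDegree_X_pow_sub_C, hn.neg_one_pow, one_mul] at this
    rw [Finset.prod_eq_multiset_prod, Multiset.map_id', hval, ← this]
    simp [hn0.symm]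
  rw [hs.prod_offDiag_roots_sub hm hnd]
  simp only [derivative_sub, derivative_X_pow, derivative_C, sub_zero, eval_mul, eval_C,
    eval_pow, eval_X]
  rw [Finset.prod_mul_distrib, Finset.prod_const, hcard, Finset.prod_pow, hprod,
    (Nat.Even.sub_odd (by omega) hn odd_one).neg_pow]
  ring

end Polynomial

theorem stmt12_general {K : Type*} [Field K] [DecidableEq (AlgebraicClosure (RatFunc K))] (n m : ℕ) (hn : Even n)
    (hcharn : ¬ (ringChar K ∣ n))
    (ω : Fin m → K) (hω : Function.Injective ω)
    (h : Fin m → Polynomial (RatFunc K))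
    (hh : ∀ i, h i = Polynomial.X ^ n - Polynomial.C (RatFunc.X + RatFunc.C (ω i)))
    (Δ : Fin m → RatFunc K)
    (hΔ : ∀ i, algebraMap (RatFunc K) (AlgebraicClosure (RatFunc K)) (Δ i) =
      ∏ p ∈ ((h i).aroots (AlgebraicClosure (RatFunc K))).toFinset.offDiag,
        (p.1 - p.2)) :
    ∀ S : Finset (Fin m), S.Nonempty →
      ∀ u : RatFunc K, (∏ i ∈ S, Δ i) ≠ u ^ 2 := by
  rintro S ⟨i₀, hi₀⟩ u hu
  have hnK : (n : K) ≠ 0 := fun h0 => hcharn ((ringChar.spec K n).mp h0)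
  have hn1 : 1 ≤ n := Nat.one_le_iff_ne_zero.mpr (by rintro rfl; exact hcharn (dvd_zero _))
  have hΔ_eq : ∀ i, Δ i =
      algebraMap K[X] (RatFunc K) (C (-(n : K) ^ n) * (X - C (-ω i)) ^ (n - 1)) := by
    intro i
    apply (algebraMap (RatFunc K) (AlgebraicClosure (RatFunc K))).injective
    rw [hΔ i, hh i, aroots_def, Polynomial.map_sub, Polynomial.map_pow, map_X, map_C,
      prod_offDiag_roots_X_pow_sub_C hn _ _ (IsAlgClosed.splits _)]
    · simp
    · rwa [← map_natCast (algebraMap K (AlgebraicClosure (RatFunc K))), _root_.map_ne_zero]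
    · rw [_root_.map_ne_zero, ← RatFunc.algebraMap_X, ← RatFunc.algebraMap_C, ← map_add]
      exact RatFunc.algebraMap_ne_zero (X_add_C_ne_zero _)
  have hsq : algebraMap K[X] (RatFunc K)
      (C ((-(n : K) ^ n) ^ S.card) * ∏ i ∈ S, (X - C (-ω i)) ^ (n - 1)) = u ^ 2 := by
    rw [← hu, Finset.prod_congr rfl fun i _ => hΔ_eq i, ← map_prod, Finset.prod_mul_distrib,
      Finset.prod_const, C_pow]
  have heven := even_rootMultiplicity_of_algebraMap_eq_sq hsq (-ω i₀)
  rw [rootMultiplicity_C_mul (pow_ne_zero _ (neg_ne_zero.mpr (pow_ne_zero _ hnK))),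
    rootMultiplicity_prod_X_sub_C_pow (a := fun i => -ω i) (neg_injective.comp hω).injOn hi₀]
    at heven
  exact Nat.not_even_iff_odd.mpr (Nat.Even.sub_odd hn1 hn odd_one) heven

/-- For `n` even, `char K ∤ 2n`, and distinct `ω₁, …, ω_m ∈ K`, the discriminant
classes of the polynomials `hᵢ = Xⁿ - T - ωᵢ` over `K(T)` are linearly independent
in the `𝔽₂`-vector space `K(T)ˣ/(K(T)ˣ)²`: no product over a nonempty subset of
the discriminants `Δ(hᵢ) = ∏_{x ≠ y roots} (x - y)` is a square in `K(T)`. -/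
theorem stmt12 {K : Type*} [Field K] [DecidableEq (AlgebraicClosure (RatFunc K))] (n m : ℕ) (hn : Even n) (hn1 : 1 ≤ n)
    (hchar2 : ringChar K ≠ 2) (hcharn : ¬ (ringChar K ∣ n))
    (ω : Fin m → K) (hω : Function.Injective ω)
    (h : Fin m → Polynomial (RatFunc K))
    (hh : ∀ i, h i = Polynomial.X ^ n - Polynomial.C (RatFunc.X + RatFunc.C (ω i)))
    (Δ : Fin m → RatFunc K)
    (hΔ : ∀ i, algebraMap (RatFunc K) (AlgebraicClosure (RatFunc K)) (Δ i) =
      ∏ p ∈ ((h i).aroots (AlgebraicClosure (RatFunc K))).toFinset.offDiag,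
        (p.1 - p.2)) :
    ∀ S : Finset (Fin m), S.Nonempty →
      ∀ u : RatFunc K, (∏ i ∈ S, Δ i) ≠ u ^ 2 :=
  stmt12_general n m hn hcharn ω hω h hh Δ hΔ
end

section
/- Let $K \subseteq L_i \subseteq M_i$ ($i = 1, \ldots, r$) be towers of finite separable field extensions with $[M_i : L_i] \leq n$, let $N$ be the Galois closure over $K$ of the compositum of the $M_i$, let $H = \mathrm{Gal}(N/K)$, let $\hat{L}$ be the compositum of the Galois closures of the $L_i$ inside $N$, let $G = \mathrm{Gal}(\hat{L}/K)$ acting faithfully on $\Omega = \coprod_i \Omega_i$ where $\Omega_i$ is the set of $K$-embeddings $L_i \hookrightarrow N$. Then there exists an injective group homomorphism $\rho : H \to S_n \wr_\Omega G$ whose composition with the projection $S_n \wr_\Omega G \to G$ is the restriction map $H \to G$. -/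
/-!
Let `T = ∐ᵢ Hom_K(Mᵢ, N)`. Restriction `T → Ω` is `Gal(N/K)`-equivariant, its fibres have at most
`[Mᵢ : Lᵢ] ≤ n` points, and the action on `T` is faithful because the images of the embeddings of
the `Mᵢ` generate the normal closure `N`. Padding every fibre to exactly `n` points identifies the
padded set with `Ω × Fin n` over `Ω`; an action on `Ω × Fin n` lifting the action on `Ω` is the
same thing as a homomorphism to `Sₙ ≀_Ω G` lifting the one to `G`, and faithfulness of the action
is injectivity of the homomorphism.
-/

open Equiv Function IntermediateField

section Wreath

variable {H Ω : Type*} [Group H] {n : ℕ} [MulAction H (Ω × Fin n)] {π : H →* Perm Ω}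

def fiberMap (σ : H) (ω : Ω) (k : Fin n) : Fin n := (σ • (ω, k)).2

variable (hπ : ∀ (σ : H) (q : Ω × Fin n), (σ • q).1 = π σ q.1)
include hπ

theorem smul_mk_eq_fiberMap (σ : H) (ω : Ω) (k : Fin n) : σ • (ω, k) = (π σ ω, fiberMap σ ω k) :=
  Prod.ext (hπ σ (ω, k)) rfl

theorem fiberMap_mul (σ τ : H) (ω : Ω) (k : Fin n) :
    fiberMap (σ * τ) ω k = fiberMap σ (π τ ω) (fiberMap τ ω k) := by
  rw [fiberMap, mul_smul, smul_mk_eq_fiberMap hπ τ]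
  rfl

def fiberPerm (σ : H) (ω : Ω) : Perm (Fin n) where
  toFun := fiberMap σ ω
  invFun := fiberMap σ⁻¹ (π σ ω)
  left_inv k := by
    rw [← fiberMap_mul hπ, inv_mul_cancel, fiberMap, one_smul]
  right_inv k := by
    have hω : π σ⁻¹ (π σ ω) = ω := by simp
    calc fiberMap σ ω (fiberMap σ⁻¹ (π σ ω) k)
        = fiberMap σ (π σ⁻¹ (π σ ω)) (fiberMap σ⁻¹ (π σ ω) k) := by rw [hω]
      _ = k := by rw [← fiberMap_mul hπ, mul_inv_cancel, fiberMap, one_smul]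

theorem fiberPerm_mul (σ τ : H) (ω : Ω) :
    fiberPerm hπ (σ * τ) ω = fiberPerm hπ σ (π τ ω) * fiberPerm hπ τ ω :=
  Equiv.ext (fiberMap_mul hπ σ τ ω)

theorem exists_injective_hom_wreathProduct [FaithfulSMul H (Ω × Fin n)]
    (φ : π.range →* MulAut (Ω → Perm (Fin n)))
    (hφ : ∀ (g : π.range) (f : Ω → Perm (Fin n)) (ω : Ω), φ g f ω = f ((g : Perm Ω)⁻¹ ω)) :
    ∃ ρ : H →* (Ω → Perm (Fin n)) ⋊[φ] π.range,
      Injective ρ ∧ ∀ σ : H, ((ρ σ).right : Perm Ω) = π σ := by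
  let ρ : H →* (Ω → Perm (Fin n)) ⋊[φ] π.range :=
    MonoidHom.mk' (fun σ => ⟨fun ω => fiberPerm hπ σ ((π σ)⁻¹ ω), ⟨π σ, σ, rfl⟩⟩)
      fun σ τ => by
        refine SemidirectProduct.ext (funext fun ω => ?_) (Subtype.ext (map_mul π σ τ))
        simp [hφ, fiberPerm_mul hπ, mul_inv_rev]
  refine ⟨ρ, (injective_iff_map_eq_one ρ).2 fun σ hσ => ?_, fun σ => rfl⟩
  have hright : π σ = 1 := congrArg (fun x => (x.right : Perm Ω)) hσ
  have hleft (ω : Ω) : fiberPerm hπ σ ω = 1 := by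
    have h : fiberPerm hπ σ ((π σ)⁻¹ ω) = 1 := congrFun (congrArg SemidirectProduct.left hσ) ω
    rwa [hright, inv_one, Perm.one_apply] at h
  refine (faithfulSMul_iff.1 ‹_›) σ ?_
  rintro ⟨ω, k⟩
  rw [smul_mk_eq_fiberMap hπ, hright]
  exact congrArg (Prod.mk ω) (DFunLike.congr_fun (hleft ω) k)

end Wreath

section Padding

variable {H T Ω : Type*} [Group H] [MulAction H T] {π : H →* Perm Ω} {p : T → Ω}

theorem natCard_fiber_apply (hp : ∀ (σ : H) (t : T), p (σ • t) = π σ (p t)) (σ : H) (ω : Ω) :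
    Nat.card {t // p t = π σ ω} = Nat.card {t // p t = ω} :=
  Nat.card_congr ((MulAction.toPerm σ).subtypeEquiv fun t => by
    rw [MulAction.toPerm_apply, hp, (π σ).injective.eq_iff]).symm

variable (π) in
abbrev sigmaFinMulAction (d : Ω → ℕ) (hd : ∀ (σ : H) (ω : Ω), d (π σ ω) = d ω) :
    MulAction H (Σ ω, Fin (d ω)) where
  smul σ x := ⟨π σ x.1, Fin.cast (hd σ x.1).symm x.2⟩
  one_smul x := by
    show (⟨π 1 x.1, _⟩ : Σ ω, Fin (d ω)) = x
    exact Sigma.ext (by simp) ((Fin.heq_ext_iff (by simp)).2 rfl)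
  mul_smul σ τ x := by
    show (⟨π (σ * τ) x.1, _⟩ : Σ ω, Fin (d ω)) = ⟨π σ (π τ x.1), _⟩
    exact Sigma.ext (by simp) ((Fin.heq_ext_iff (by simp)).2 rfl)

theorem exists_equiv_prod_fin_of_natCard_fiber {X : Type*} {q : X → Ω} {n : ℕ}
    [∀ ω, Finite {x // q x = ω}] (hq : ∀ ω, Nat.card {x // q x = ω} = n) :
    ∃ E : X ≃ Ω × Fin n, ∀ x, (E x).1 = q x :=
  ⟨(sigmaFiberEquiv q).symm.trans ((sigmaCongrRight fun ω =>
      (Finite.equivFin _).trans (finCongr (hq ω))).trans (sigmaEquivProd Ω (Fin n))),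
    fun _ => rfl⟩

theorem exists_faithfulSMul_prod_fin_of_equiv {X : Type*} [MulAction H X] [FaithfulSMul H X]
    {q : X → Ω} (hq : ∀ (σ : H) (x : X), q (σ • x) = π σ (q x)) {n : ℕ}
    (E : X ≃ Ω × Fin n) (hE : ∀ x, (E x).1 = q x) :
    ∃ _ : MulAction H (Ω × Fin n), FaithfulSMul H (Ω × Fin n) ∧
      ∀ (σ : H) (y : Ω × Fin n), (σ • y).1 = π σ y.1 := by
  let := E.symm.mulAction H
  refine ⟨this, E.symm.faithfulSMul H, fun σ y => ?_⟩
  rw [Equiv.smul_def, symm_symm, hE, hq, ← hE, apply_symm_apply]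

theorem exists_faithfulSMul_prod_fin [FaithfulSMul H T]
    (hp : ∀ (σ : H) (t : T), p (σ • t) = π σ (p t)) {n : ℕ}
    [∀ ω, Finite {t // p t = ω}] (hn : ∀ ω, Nat.card {t // p t = ω} ≤ n) :
    ∃ _ : MulAction H (Ω × Fin n), FaithfulSMul H (Ω × Fin n) ∧
      ∀ (σ : H) (y : Ω × Fin n), (σ • y).1 = π σ y.1 := by
  let d ω := n - Nat.card {t // p t = ω}
  let := sigmaFinMulAction π d fun σ ω => by simp only [d, natCard_fiber_apply hp]
  let q : T ⊕ (Σ ω, Fin (d ω)) → Ω := Sum.elim p Sigma.fst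
  have hq (σ : H) : ∀ x, q (σ • x) = π σ (q x)
    | .inl t => hp σ t
    | .inr _ => rfl
  have hfiber (ω : Ω) : {x // q x = ω} ≃ {t // p t = ω} ⊕ Fin (d ω) :=
    subtypeSum.trans (sumCongr (Equiv.refl _) (sigmaSubtype ω))
  have (ω : Ω) : Finite {x // q x = ω} := Finite.of_equiv _ (hfiber ω).symm
  have hcard (ω : Ω) : Nat.card {x // q x = ω} = n := by
    rw [Nat.card_congr (hfiber ω), Nat.card_sum, Nat.card_fin]
    exact Nat.add_sub_cancel' (hn ω)
  obtain ⟨E, hE⟩ := exists_equiv_prod_fin_of_natCard_fiber hcard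
  exact exists_faithfulSMul_prod_fin_of_equiv hq E hE

end Padding

section Galois

theorem Sigma.mk_fiber_surjective {ι : Type*} {α β : ι → Type*} (g : ∀ i, α i → β i)
    (i : ι) (b : β i) :
    Surjective fun a : {a // g i a = b} =>
      (⟨⟨i, a.1⟩, congrArg (Sigma.mk i) a.2⟩ :
        {x : Sigma α // (⟨x.1, g x.1 x.2⟩ : Sigma β) = ⟨i, b⟩}) := by
  rintro ⟨⟨j, a⟩, h⟩
  obtain ⟨rfl, h⟩ := Sigma.mk.inj_iff.1 h
  exact ⟨⟨a, eq_of_heq h⟩, rfl⟩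

namespace AlgHom

variable {A B C D : Type*} [CommRing A] [CommRing B] [CommRing C] [CommRing D]
  [Algebra A B] [Algebra A C] [Algebra A D] [Algebra B C] [IsScalarTower A B C]

def domRestrictFiberEquiv (e : B →ₐ[A] D) :
    {f : C →ₐ[A] D // f.domRestrict B = e} ≃ @AlgHom B C D _ _ _ _ e.toRingHom.toAlgebra :=
  (subtypeEquiv algHomEquivSigma fun _ => Iff.rfl).trans (sigmaSubtype e)

variable [IsDomain D] [Module.Free B C] [Module.Finite B C]

theorem finite_fiber_domRestrict (e : B →ₐ[A] D) :
    _root_.Finite {f : C →ₐ[A] D // f.domRestrict B = e} :=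
  letI := e.toRingHom.toAlgebra
  _root_.Finite.of_equiv _ (domRestrictFiberEquiv e).symm

theorem natCard_fiber_domRestrict_le (e : B →ₐ[A] D) :
    Nat.card {f : C →ₐ[A] D // f.domRestrict B = e} ≤ Module.finrank B C :=
  letI := e.toRingHom.toAlgebra
  (Nat.card_congr (domRestrictFiberEquiv e)).trans_le (card_algHom_le_finrank B C D)

end AlgHom

instance AlgHom.instMulActionAlgEquiv {R A B : Type*} [CommSemiring R] [Semiring A] [Semiring B]
    [Algebra R A] [Algebra R B] : MulAction (B ≃ₐ[R] B) (A →ₐ[R] B) where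
  smul σ f := (σ : B →ₐ[R] B).comp f
  one_smul _ := rfl
  mul_smul _ _ _ := rfl

variable {K N : Type*} [Field K] [Field N] [Algebra K N]

/-- The images of the embeddings of `⨆ i, F i` generate `N`, and `σ` fixes each of them. -/
theorem faithfulSMul_sigma_algHom {ι : Type*} (F : ι → IntermediateField K N)
    (hF : normalClosure K ↥(⨆ i, F i) N = ⊤) :
    FaithfulSMul (N ≃ₐ[K] N) (Σ i, F i →ₐ[K] N) := by
  refine faithfulSMul_iff.2 fun σ hσ => ?_
  have hsup (f : ↥(⨆ i, F i) →ₐ[K] N) : (σ : N →ₐ[K] N).comp f = f :=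
    algHom_ext_of_eq_adjoin K (iSup_eq_adjoin K F) fun x hx => by
      obtain ⟨i, hi⟩ := Set.mem_iUnion.1 hx
      exact DFunLike.congr_fun (sigma_mk_injective (hσ ⟨i, f.comp (inclusion (le_iSup F i))⟩))
        ⟨x, hi⟩
  rw [← Subgroup.mem_bot, ← fixingSubgroup_top, ← hF, ← Subgroup.zpowers_le, ← le_iff_le,
    normalClosure_le_iff]
  intro f
  rw [le_iff_le, Subgroup.zpowers_le, IntermediateField.mem_fixingSubgroup_iff]
  rintro _ ⟨x, rfl⟩
  exact DFunLike.congr_fun (hsup f) x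

end Galois

theorem stmt19_general {K N : Type*} [Field K] [Field N] [Algebra K N]
    [FiniteDimensional K N]
    (r n : ℕ) (L : Fin r → IntermediateField K N)
    (M : (i : Fin r) → IntermediateField ↥(L i) N)
    (hMn : ∀ i, Module.finrank ↥(L i) ↥(M i) ≤ n)
    (hN : IntermediateField.normalClosure K ↥(⨆ i, (M i).restrictScalars K) N = ⊤)
    (π : (N ≃ₐ[K] N) →* Equiv.Perm ((i : Fin r) × (↥(L i) →ₐ[K] N)))
    (hπ : ∀ (σ : N ≃ₐ[K] N) (i : Fin r) (e : ↥(L i) →ₐ[K] N),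
      π σ ⟨i, e⟩ = ⟨i, σ.toAlgHom.comp e⟩)
    (φ : π.range →* MulAut (((i : Fin r) × (↥(L i) →ₐ[K] N)) → Equiv.Perm (Fin n)))
    (hφ : ∀ (g : π.range) (f : ((i : Fin r) × (↥(L i) →ₐ[K] N)) → Equiv.Perm (Fin n))
      (x : (i : Fin r) × (↥(L i) →ₐ[K] N)),
      φ g f x = f ((g : Equiv.Perm ((i : Fin r) × (↥(L i) →ₐ[K] N)))⁻¹ x)) :
    ∃ ρ : (N ≃ₐ[K] N) →*
        ((((i : Fin r) × (↥(L i) →ₐ[K] N)) → Equiv.Perm (Fin n)) ⋊[φ] π.range),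
      Function.Injective ρ ∧
      ∀ σ : N ≃ₐ[K] N,
        ((ρ σ).right : Equiv.Perm ((i : Fin r) × (↥(L i) →ₐ[K] N))) = π σ := by
  let T := Σ i, ↥(M i) →ₐ[K] N
  let p : T → Σ i, ↥(L i) →ₐ[K] N := fun t => ⟨t.1, t.2.domRestrict (L t.1)⟩
  have hp (σ : N ≃ₐ[K] N) (t : T) : p (σ • t) = π σ (p t) := by
    rw [hπ]
    rfl
  have : FaithfulSMul (N ≃ₐ[K] N) T :=
    faithfulSMul_sigma_algHom (fun i => (M i).restrictScalars K) hN
  have hfiber (i : Fin r) (e : ↥(L i) →ₐ[K] N) :=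
    Sigma.mk_fiber_surjective (fun i (f : ↥(M i) →ₐ[K] N) => f.domRestrict (L i)) i e
  have (i : Fin r) (e : ↥(L i) →ₐ[K] N) :
      Finite {f : ↥(M i) →ₐ[K] N // f.domRestrict (L i) = e} :=
    AlgHom.finite_fiber_domRestrict e
  have (ω : Σ i, ↥(L i) →ₐ[K] N) : Finite {t // p t = ω} :=
    Finite.of_surjective _ (hfiber ω.1 ω.2)
  have hcard (ω : Σ i, ↥(L i) →ₐ[K] N) : Nat.card {t // p t = ω} ≤ n :=
    (Nat.card_le_card_of_surjective _ (hfiber ω.1 ω.2)).trans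
      ((AlgHom.natCard_fiber_domRestrict_le ω.2).trans (hMn ω.1))
  obtain ⟨_, _, hcov⟩ := exists_faithfulSMul_prod_fin hp hcard
  exact exists_injective_hom_wreathProduct hcov φ hφ

/-- Towers `K ⊆ Lᵢ ⊆ Mᵢ` of finite separable extensions inside a Galois extension
`N/K` which is the Galois (normal) closure of the compositum of the `Mᵢ`, with
`[Mᵢ : Lᵢ] ≤ n`.  Let `Ω = ∐ᵢ Ωᵢ` where `Ωᵢ` is the set of `K`-embeddings
`Lᵢ ↪ N`, let `π : Gal(N/K) → Sym(Ω)` be the action by post-composition (whose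
image is the permutation group `G = Gal(L̂/K)` on `Ω`), and let `φ` be the action
of `G` on `Sₙ^Ω` permuting coordinates.  Then there is an injective homomorphism
`ρ : Gal(N/K) → Sₙ ≀_Ω G` whose composition with the projection to `G` is `π`. -/
theorem stmt19 {K N : Type*} [Field K] [Field N] [Algebra K N]
    [FiniteDimensional K N] [IsGalois K N]
    (r n : ℕ) (L : Fin r → IntermediateField K N)
    (M : (i : Fin r) → IntermediateField ↥(L i) N)
    (hMn : ∀ i, Module.finrank ↥(L i) ↥(M i) ≤ n)
    (hN : IntermediateField.normalClosure K ↥(⨆ i, (M i).restrictScalars K) N = ⊤)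
    (π : (N ≃ₐ[K] N) →* Equiv.Perm ((i : Fin r) × (↥(L i) →ₐ[K] N)))
    (hπ : ∀ (σ : N ≃ₐ[K] N) (i : Fin r) (e : ↥(L i) →ₐ[K] N),
      π σ ⟨i, e⟩ = ⟨i, σ.toAlgHom.comp e⟩)
    (φ : π.range →* MulAut (((i : Fin r) × (↥(L i) →ₐ[K] N)) → Equiv.Perm (Fin n)))
    (hφ : ∀ (g : π.range) (f : ((i : Fin r) × (↥(L i) →ₐ[K] N)) → Equiv.Perm (Fin n))
      (x : (i : Fin r) × (↥(L i) →ₐ[K] N)),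
      φ g f x = f ((g : Equiv.Perm ((i : Fin r) × (↥(L i) →ₐ[K] N)))⁻¹ x)) :
    ∃ ρ : (N ≃ₐ[K] N) →*
        ((((i : Fin r) × (↥(L i) →ₐ[K] N)) → Equiv.Perm (Fin n)) ⋊[φ] π.range),
      Function.Injective ρ ∧
      ∀ σ : N ≃ₐ[K] N,
        ((ρ σ).right : Equiv.Perm ((i : Fin r) × (↥(L i) →ₐ[K] N))) = π σ :=
  stmt19_general r n L M hMn hN π hπ φ hφ
end
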